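/- Proposition (continuity of optimal posteriors) fails in general: there exist finite 𝒳 = 𝒴 = {0,1}, two sequences of joint distributions (p_n) and (p'_n) both converging to the same limit p₀, with unique optimal decision rules q_n, q'_n (the posteriors), such that q_n(1|1) = 1 for all n while q'_n(1|1) = 0 for all n; hence no single decision rule q₀ can be the limit of both sequences of optimal rules. -/

import Mathlib

open scoped BigOperators

/-- The sequence `p_n` of joint distributions on `{0,1}²`. -/
noncomputable def pseq (n : ℕ) : Fin 2 × Fin 2 → ℝ := fun a =>
  if a = (0, 0) then 1/2
  else if a = (0, 1) then ((n : ℝ) - 1) / (2 * n)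
  else if a = (1, 0) then 0
  else 1 / (2 * n)

/-- The sequence `p'_n` of joint distributions on `{0,1}²`. -/
noncomputable def pseq' (n : ℕ) : Fin 2 × Fin 2 → ℝ := fun a =>
  if a = (0, 0) then ((n : ℝ) - 1) / (2 * n)
  else if a = (0, 1) then 1/2
  else if a = (1, 0) then 1 / (2 * n)
  else 0

/-- The common limit distribution `p₀`. -/
noncomputable def plim : Fin 2 × Fin 2 → ℝ := fun a => if a.1 = 0 then 1/2 else 0

/-- The posterior (optimal decision rule) `q_n(y|x) = p_n(x,y)/p_n(x)`. -/
noncomputable def qseq (n : ℕ) : Fin 2 → Fin 2 → ℝ :=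
  fun x y => pseq n (x, y) / ∑ y', pseq n (x, y')

/-- The posterior (optimal decision rule) `q'_n(y|x) = p'_n(x,y)/p'_n(x)`. -/
noncomputable def qseq' (n : ℕ) : Fin 2 → Fin 2 → ℝ :=
  fun x y => pseq' n (x, y) / ∑ y', pseq' n (x, y')

/-! The row `x = 1` has mass `1/(2n)` under both `p_n` and `p'_n`, so it disappears in the
common limit `p₀`; but `p_n` puts all of that mass on `y = 1` and `p'_n` all of it on `y = 0`,
so the posteriors at `x = 1` stay at `1` and `0`, and a common limit of the posteriors would
have to take both values at `(1, 1)`. -/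

open Filter Topology

lemma tendsto_one_div_two_mul_natCast_atTop :
    Tendsto (fun n : ℕ => 1 / (2 * (n : ℝ))) atTop (𝓝 0) := by
  simp only [one_div]
  exact (tendsto_natCast_atTop_atTop.const_mul_atTop two_pos).inv_tendsto_atTop

lemma tendsto_natCast_sub_one_div_two_mul_atTop :
    Tendsto (fun n : ℕ => ((n : ℝ) - 1) / (2 * n)) atTop (𝓝 (1 / 2)) := by
  have h := (tendsto_const_nhds (x := (1 : ℝ) / 2)).sub tendsto_one_div_two_mul_natCast_atTop
  rw [sub_zero] at h
  refine h.congr' ?_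
  filter_upwards [eventually_gt_atTop 0] with n hn
  field_simp

lemma eq_of_tendsto_of_eventually_eq {ι X Y : Type*} [TopologicalSpace X] [TopologicalSpace Y]
    [T2Space Y] {f : X → Y} (hf : Continuous f) {l : Filter ι} [l.NeBot] {u v : ι → X} {x : X}
    (hu : Tendsto u l (𝓝 x)) (hv : Tendsto v l (𝓝 x)) {a b : Y}
    (hua : ∀ᶠ n in l, f (u n) = a) (hvb : ∀ᶠ n in l, f (v n) = b) : a = b := by
  have ha : f x = a := tendsto_nhds_unique ((hf.tendsto x).comp hu)
    (tendsto_const_nhds.congr' (hua.mono fun _ h => h.symm))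
  have hb : f x = b := tendsto_nhds_unique ((hf.tendsto x).comp hv)
    (tendsto_const_nhds.congr' (hvb.mono fun _ h => h.symm))
  exact ha.symm.trans hb

lemma tendsto_pseq : Tendsto pseq atTop (𝓝 plim) := by
  rw [tendsto_pi_nhds]
  rintro ⟨x, y⟩
  fin_cases x <;> fin_cases y <;> norm_num [pseq, plim, Prod.ext_iff]
  · exact tendsto_natCast_sub_one_div_two_mul_atTop
  · simpa [one_div, mul_inv, mul_comm] using tendsto_one_div_two_mul_natCast_atTop

lemma tendsto_pseq' : Tendsto pseq' atTop (𝓝 plim) := by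
  rw [tendsto_pi_nhds]
  rintro ⟨x, y⟩
  fin_cases x <;> fin_cases y <;> norm_num [pseq', plim, Prod.ext_iff]
  · exact tendsto_natCast_sub_one_div_two_mul_atTop
  · simpa [one_div, mul_inv, mul_comm] using tendsto_one_div_two_mul_natCast_atTop

lemma qseq_one_one {n : ℕ} (hn : 1 ≤ n) : qseq n 1 1 = 1 := by
  have hn0 : n ≠ 0 := Nat.one_le_iff_ne_zero.mp hn
  simp [qseq, pseq, Prod.ext_iff, hn0]

lemma qseq'_one_one (n : ℕ) : qseq' n 1 1 = 0 := by
  simp [qseq', pseq']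

theorem posterior_continuity_fails :
    Filter.Tendsto pseq Filter.atTop (nhds plim) ∧
    Filter.Tendsto pseq' Filter.atTop (nhds plim) ∧
    (∀ n : ℕ, 1 ≤ n → qseq n 1 1 = 1 ∧ qseq' n 1 1 = 0) ∧
    ¬ ∃ q₀ : Fin 2 → Fin 2 → ℝ,
        Filter.Tendsto qseq Filter.atTop (nhds q₀) ∧
        Filter.Tendsto qseq' Filter.atTop (nhds q₀) := by
  refine ⟨tendsto_pseq, tendsto_pseq', fun n hn => ⟨qseq_one_one hn, qseq'_one_one n⟩, ?_⟩
  rintro ⟨q₀, hq, hq'⟩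
  have h10 : (1 : ℝ) = 0 :=
    eq_of_tendsto_of_eventually_eq (f := fun q : Fin 2 → Fin 2 → ℝ => q 1 1) (by fun_prop) hq hq'
      ((eventually_ge_atTop 1).mono fun _ => qseq_one_one) (Eventually.of_forall qseq'_one_one)
  exact one_ne_zero h10
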